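/- arXiv:2507.15408 — 4 statements merged into one kernel-verified Lean document; each statement's English description precedes it below -/
import Mathlib

section
/- Let (q_n) be a non-increasing sequence of non-negative real numbers, let β > 0, and let ℓ be a slowly varying function (i.e., ℓ is positive, measurable, and ℓ(λx)/ℓ(x) → 1 as x → ∞ for every λ > 0). If there exist constants 0 < c ≤ C such that c·n^β·ℓ(n) ≤ ∑_{k=0}^{n} k·q_k ≤ C·n^β·ℓ(n) for all sufficiently large n, then there exist constants 0 < c' ≤ C' such that c'·n^{β-2}·ℓ(n) ≤ q_n ≤ C'·n^{β-2}·ℓ(n) for all sufficiently large n. -/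
open Filter Finset

/-- A slowly varying function: positive, measurable, and ℓ(λx)/ℓ(x) → 1 as x → ∞. -/
def SlowlyVarying (ℓ : ℝ → ℝ) : Prop :=
  (∀ x > 0, 0 < ℓ x) ∧ Measurable ℓ ∧
    ∀ l > (0:ℝ), Tendsto (fun x => ℓ (l * x) / ℓ x) atTop (nhds 1)

theorem stmt0 (q : ℕ → ℝ) (hq0 : ∀ n, 0 ≤ q n) (hmono : Antitone q)
    (β : ℝ) (hβ : 0 < β) (ℓ : ℝ → ℝ) (hℓ : SlowlyVarying ℓ)
    (c C : ℝ) (hc : 0 < c) (hcC : c ≤ C)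
    (hbound : ∀ᶠ n : ℕ in atTop,
      c * (n : ℝ) ^ β * ℓ n ≤ ∑ k ∈ range (n + 1), (k : ℝ) * q k ∧
      ∑ k ∈ range (n + 1), (k : ℝ) * q k ≤ C * (n : ℝ) ^ β * ℓ n) :
    ∃ c' C' : ℝ, 0 < c' ∧ c' ≤ C' ∧ ∀ᶠ n : ℕ in atTop,
      c' * (n : ℝ) ^ (β - 2) * ℓ n ≤ q n ∧ q n ≤ C' * (n : ℝ) ^ (β - 2) * ℓ n := by
  have hC : 0 < C := lt_of_lt_of_le hc hcC
  -- choose m with c * m^β ≥ 3C and m ≥ 2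
  obtain ⟨m, hm2, hmβ⟩ : ∃ m : ℕ, 2 ≤ m ∧ 3 * C ≤ c * (m : ℝ) ^ β := by
    have h1 : Tendsto (fun x : ℝ => x ^ β) atTop atTop := tendsto_rpow_atTop hβ
    have h2 : Tendsto (fun n : ℕ => (n : ℝ) ^ β) atTop atTop :=
      h1.comp tendsto_natCast_atTop_atTop
    have h3 : ∀ᶠ n : ℕ in atTop, 3 * C / c ≤ (n : ℝ) ^ β := h2.eventually_ge_atTop _
    obtain ⟨m, hm2, hm⟩ := ((eventually_ge_atTop 2).and h3).exists
    exact ⟨m, hm2, by rw [div_le_iff₀ hc] at hm; linarith [hm]⟩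
  have hm1 : 1 ≤ m := le_trans (by norm_num) hm2
  have hmR : (0:ℝ) < (m:ℝ) := by
    have h0 : 0 < m := by omega
    exact_mod_cast h0
  have hmR2 : (2:ℝ) ≤ (m:ℝ) := by exact_mod_cast hm2
  -- slow variation: eventually ℓ(m n)/ℓ(n) ≥ 2/3
  have hsv : ∀ᶠ n : ℕ in atTop, (2/3 : ℝ) ≤ ℓ ((m:ℝ) * n) / ℓ n := by
    have h1 := hℓ.2.2 (m:ℝ) hmR
    have h2 : ∀ᶠ x : ℝ in atTop, (2/3 : ℝ) ≤ ℓ ((m:ℝ) * x) / ℓ x :=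
      h1.eventually (eventually_ge_nhds (by norm_num))
    exact tendsto_natCast_atTop_atTop.eventually h2
  obtain ⟨N, hN⟩ := eventually_atTop.mp hbound
  refine ⟨C / (m:ℝ)^2, 4 * C, by positivity, ?_, ?_⟩
  · rw [div_le_iff₀ (by positivity)]
    have h4 : (1:ℝ) ≤ (m:ℝ)^2 := by nlinarith [hmR2]
    have h5 := mul_le_mul_of_nonneg_left h4 hC.le
    linarith [h5, mul_nonneg hC.le (sq_nonneg (m:ℝ))]
  filter_upwards [eventually_ge_atTop (max N 1), hsv] with n hn hsvn
  have hnN : N ≤ n := le_trans (le_max_left _ _) hn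
  have hn1 : 1 ≤ n := le_trans (le_max_right _ _) hn
  have hnR : (0:ℝ) < n := by exact_mod_cast hn1
  have hℓn : 0 < ℓ n := hℓ.1 _ hnR
  have hrpow : (n:ℝ) ^ (β - 2) = (n:ℝ) ^ β / (n:ℝ)^2 := by
    rw [Real.rpow_sub hnR, Real.rpow_two]
  have hnβ : (0:ℝ) < (n:ℝ) ^ β := Real.rpow_pos_of_pos hnR β
  constructor
  · -- lower bound
    have hnm : n ≤ m * n := by
      calc n = 1 * n := (one_mul n).symm
        _ ≤ m * n := Nat.mul_le_mul_right n hm1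
    have hmul : N ≤ m * n := le_trans hnN hnm
    have hS1 := (hN (m*n) hmul).1
    have hS2 := (hN n hnN).2
    -- the difference sum
    have hdiff : ∑ k ∈ Ico (n+1) (m*n+1), (k : ℝ) * q k
        = ∑ k ∈ range (m*n + 1), (k : ℝ) * q k - ∑ k ∈ range (n + 1), (k : ℝ) * q k :=
      Finset.sum_Ico_eq_sub _ (by omega : n + 1 ≤ m*n + 1)
    have hub : ∑ k ∈ Ico (n+1) (m*n+1), (k : ℝ) * q k ≤ ((m:ℝ)*n) * ((m:ℝ)*n) * q n := by
      calc ∑ k ∈ Ico (n+1) (m*n+1), (k : ℝ) * q k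
          ≤ ∑ k ∈ Ico (n+1) (m*n+1), ((m:ℝ)*n) * q n := by
            refine Finset.sum_le_sum fun k hk => ?_
            rw [Finset.mem_Ico] at hk
            have hk1 : (k:ℝ) ≤ (m:ℝ)*n := by
              have hle : k ≤ m * n := by omega
              calc (k:ℝ) ≤ ((m*n : ℕ) : ℝ) := by exact_mod_cast hle
                _ = (m:ℝ)*n := by push_cast; ring
            have hk2 : q k ≤ q n := hmono (by omega)
            exact mul_le_mul hk1 hk2 (hq0 k) (by positivity)
        _ = ((m*n + 1) - (n+1) : ℕ) * (((m:ℝ)*n) * q n) := by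
            rw [Finset.sum_const, Nat.card_Ico, nsmul_eq_mul]
        _ ≤ ((m:ℝ)*n) * (((m:ℝ)*n) * q n) := by
            have h1 : ((m*n + 1) - (n+1) : ℕ) ≤ m * n := by omega
            have h1' : (((m*n + 1) - (n+1) : ℕ) : ℝ) ≤ (m:ℝ)*n := by
              calc (((m*n + 1) - (n+1) : ℕ) : ℝ) ≤ ((m*n : ℕ) : ℝ) := by exact_mod_cast h1
                _ = (m:ℝ)*n := by push_cast; ring
            have h2 : (0:ℝ) ≤ ((m:ℝ)*n) * q n :=
              mul_nonneg (by positivity) (hq0 n)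
            exact mul_le_mul_of_nonneg_right h1' h2
        _ = ((m:ℝ)*n) * ((m:ℝ)*n) * q n := by ring
    -- lower bound on S(mn)
    have hcast : ((m*n : ℕ) : ℝ) = (m:ℝ) * n := by push_cast; ring
    have hmnβ : ((m*n : ℕ) : ℝ) ^ β = (m:ℝ)^β * (n:ℝ)^β := by
      rw [hcast, Real.mul_rpow hmR.le hnR.le]
    have hℓmn : (2/3 : ℝ) * ℓ n ≤ ℓ ((m:ℝ) * n) := by
      rw [le_div_iff₀ hℓn] at hsvn
      linarith
    have hS1' : c * ((m:ℝ)^β * (n:ℝ)^β) * ℓ ((m:ℝ)*n)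
        ≤ ∑ k ∈ range (m*n + 1), (k : ℝ) * q k := by
      rw [← hmnβ, ← hcast]; exact hS1
    have hmβ' : (0:ℝ) < (m:ℝ)^β := Real.rpow_pos_of_pos hmR β
    have step : (2/3 : ℝ) * (c * (m:ℝ)^β) * ((n:ℝ)^β * ℓ n)
        ≤ c * ((m:ℝ)^β * (n:ℝ)^β) * ℓ ((m:ℝ)*n) := by
      have h0 : (0:ℝ) ≤ c * ((m:ℝ)^β * (n:ℝ)^β) := by positivity
      have h := mul_le_mul_of_nonneg_left hℓmn h0
      calc (2/3 : ℝ) * (c * (m:ℝ)^β) * ((n:ℝ)^β * ℓ n)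
          = c * ((m:ℝ)^β * (n:ℝ)^β) * ((2/3 : ℝ) * ℓ n) := by ring
        _ ≤ _ := h
    have step2 : 2 * C * ((n:ℝ)^β * ℓ n) ≤ (2/3 : ℝ) * (c * (m:ℝ)^β) * ((n:ℝ)^β * ℓ n) := by
      have hX : (0:ℝ) ≤ (n:ℝ)^β * ℓ n := by positivity
      have h := mul_le_mul_of_nonneg_right hmβ hX
      linarith only [h]
    have key : C * (n:ℝ)^β * ℓ n ≤ ((m:ℝ)*n) * ((m:ℝ)*n) * q n := by
      linarith only [hdiff, hub, hS1', hS2, step, step2]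
    rw [hrpow, div_mul_div_comm, div_mul_eq_mul_div, div_le_iff₀ (by positivity)]
    linarith only [key]
  · -- upper bound
    have hS2 := (hN n hnN).2
    set h := n / 2 with hh
    have hsub : Ico (h+1) (n+1) ⊆ range (n+1) := by
      intro k hk
      rw [Finset.mem_Ico] at hk
      rw [Finset.mem_range]
      omega
    have hlb : ((n - h : ℕ) : ℝ) * (((h:ℝ)+1) * q n) ≤ ∑ k ∈ range (n + 1), (k : ℝ) * q k := by
      calc ((n - h : ℕ) : ℝ) * (((h:ℝ)+1) * q n)
          = ∑ k ∈ Ico (h+1) (n+1), ((h:ℝ)+1) * q n := by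
            rw [Finset.sum_const, Nat.card_Ico, nsmul_eq_mul]
            congr 2
            omega
        _ ≤ ∑ k ∈ Ico (h+1) (n+1), (k : ℝ) * q k := by
            refine Finset.sum_le_sum fun k hk => ?_
            rw [Finset.mem_Ico] at hk
            have hk1 : ((h:ℝ)+1) ≤ (k:ℝ) := by exact_mod_cast hk.1
            have hk2 : q n ≤ q k := hmono (by omega)
            exact mul_le_mul hk1 hk2 (hq0 n) (by positivity)
        _ ≤ ∑ k ∈ range (n + 1), (k : ℝ) * q k := by
            refine Finset.sum_le_sum_of_subset_of_nonneg hsub fun k _ _ => ?_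
            have hk0 : (0:ℝ) ≤ (k:ℝ) := by positivity
            exact mul_nonneg hk0 (hq0 k)
    have h1 : (n:ℝ) ≤ 2 * ((n - h : ℕ) : ℝ) := by
      have h' : n ≤ 2 * (n - h) := by omega
      exact_mod_cast h'
    have h2 : (n:ℝ) ≤ 2 * ((h:ℝ)+1) := by
      have h' : n ≤ 2 * (h + 1) := by omega
      have h'' := (Nat.cast_le (α := ℝ)).mpr h'
      push_cast at h''
      linarith
    have ha0 : (0:ℝ) ≤ ((n - h : ℕ) : ℝ) := Nat.cast_nonneg _
    have hb0 : (0:ℝ) ≤ (h:ℝ)+1 := by positivity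
    have hab : (n:ℝ)*(n:ℝ) ≤ (2 * ((n - h : ℕ) : ℝ)) * (2 * ((h:ℝ)+1)) :=
      mul_le_mul h1 h2 hnR.le (by positivity)
    have hq2 : q n * ((n:ℝ)*(n:ℝ)) ≤ q n * ((2 * ((n - h : ℕ) : ℝ)) * (2 * ((h:ℝ)+1))) :=
      mul_le_mul_of_nonneg_left hab (hq0 n)
    have key : q n * (n:ℝ)^2 ≤ 4 * (C * (n:ℝ)^β * ℓ n) := by
      linarith only [hq2, hlb, hS2]
    have hfin : q n ≤ (4 * (C * (n:ℝ)^β * ℓ n)) / (n:ℝ)^2 :=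
      (le_div_iff₀ (by positivity)).mpr key
    calc q n ≤ (4 * (C * (n:ℝ)^β * ℓ n)) / (n:ℝ)^2 := hfin
      _ = 4 * C * ((n:ℝ)^β / (n:ℝ)^2) * ℓ n := by ring
      _ = 4 * C * (n:ℝ)^(β-2) * ℓ n := by rw [hrpow]
end

section
/- Let (q_n) be a non-increasing sequence of non-negative real numbers, let β > 0, let j ≥ 1 be an integer, and let ℓ be a slowly varying function. If ∑_{k=0}^{n} k^j·q_k ≍ n^β·ℓ(n) (uniformly in n, i.e., with the same implicit constants for all large n), then q_n ≍ n^{β-j-1}·ℓ(n) for all large n. -/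
open Filter Finset

private lemma rpow_split (x : ℝ) (hx : 0 < x) (β : ℝ) (j : ℕ) :
    x ^ (β - (j:ℝ) - 1) * x ^ (j+1) = x ^ β := by
  rw [← Real.rpow_natCast x (j+1), ← Real.rpow_add hx]
  congr 1
  push_cast
  ring

private lemma sum_Ico_le_aux (q : ℕ → ℝ) (hq0 : ∀ n, 0 ≤ q n) (hmono : Antitone q)
    (j a b : ℕ) :
    ∑ k ∈ Ico (a+1) (b+1), (k:ℝ)^j * q k ≤ ((b - a : ℕ):ℝ) * (b:ℝ)^j * q a := by
  calc ∑ k ∈ Ico (a+1) (b+1), (k:ℝ)^j * q k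
      ≤ ∑ _k ∈ Ico (a+1) (b+1), (b:ℝ)^j * q a := by
        apply Finset.sum_le_sum
        intro k hk
        obtain ⟨hk1, hk2⟩ := Finset.mem_Ico.1 hk
        have hka : q k ≤ q a := hmono (by omega)
        have hkb : (k:ℝ) ≤ (b:ℝ) := by exact_mod_cast by omega
        exact mul_le_mul (pow_le_pow_left₀ (by positivity) hkb j) hka (hq0 k) (by positivity)
    _ = ((b - a : ℕ):ℝ) * (b:ℝ)^j * q a := by
        rw [Finset.sum_const, Nat.card_Ico, nsmul_eq_mul]
        have h : b + 1 - (a + 1) = b - a := by omega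
        rw [h, mul_assoc]

private lemma sum_Ico_ge_aux (q : ℕ → ℝ) (hq0 : ∀ n, 0 ≤ q n) (hmono : Antitone q)
    (j a b : ℕ) :
    ((b - a : ℕ):ℝ) * ((a+1 : ℕ):ℝ)^j * q b ≤ ∑ k ∈ Ico (a+1) (b+1), (k:ℝ)^j * q k := by
  calc ((b - a : ℕ):ℝ) * ((a+1:ℕ):ℝ)^j * q b
      = ∑ _k ∈ Ico (a+1) (b+1), ((a+1:ℕ):ℝ)^j * q b := by
        rw [Finset.sum_const, Nat.card_Ico, nsmul_eq_mul]
        have h : b + 1 - (a + 1) = b - a := by omega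
        rw [h, mul_assoc]
    _ ≤ ∑ k ∈ Ico (a+1) (b+1), (k:ℝ)^j * q k := by
        apply Finset.sum_le_sum
        intro k hk
        obtain ⟨hk1, hk2⟩ := Finset.mem_Ico.1 hk
        have hkb : q b ≤ q k := hmono (by omega)
        have hak : ((a+1:ℕ):ℝ) ≤ (k:ℝ) := by exact_mod_cast hk1
        exact mul_le_mul (pow_le_pow_left₀ (by positivity) hak j) hkb (hq0 b) (by positivity)

theorem stmt1 (q : ℕ → ℝ) (hq0 : ∀ n, 0 ≤ q n) (hmono : Antitone q)
    (β : ℝ) (hβ : 0 < β) (j : ℕ) (hj : 1 ≤ j) (ℓ : ℝ → ℝ) (hℓ : SlowlyVarying ℓ)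
    (c C : ℝ) (hc : 0 < c) (hcC : c ≤ C)
    (hbound : ∀ᶠ n : ℕ in atTop,
      c * (n : ℝ) ^ β * ℓ n ≤ ∑ k ∈ range (n + 1), (k : ℝ) ^ j * q k ∧
      ∑ k ∈ range (n + 1), (k : ℝ) ^ j * q k ≤ C * (n : ℝ) ^ β * ℓ n) :
    ∃ c' C' : ℝ, 0 < c' ∧ c' ≤ C' ∧ ∀ᶠ n : ℕ in atTop,
      c' * (n : ℝ) ^ (β - (j : ℝ) - 1) * ℓ n ≤ q n ∧
      q n ≤ C' * (n : ℝ) ^ (β - (j : ℝ) - 1) * ℓ n := by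
  obtain ⟨hpos, -, hsv⟩ := hℓ
  obtain ⟨N0, hN0⟩ := eventually_atTop.1 hbound
  -- choose L : ℕ with 2 ≤ L and 2*(C+1) ≤ c * L^β
  obtain ⟨L, hL2, hLβ⟩ : ∃ L : ℕ, 2 ≤ L ∧ 2 * (C + 1) ≤ c * (L:ℝ) ^ β := by
    have h1 : Tendsto (fun x : ℝ => c * x ^ β) atTop atTop :=
      (tendsto_rpow_atTop hβ).const_mul_atTop hc
    have h2 : Tendsto (fun L : ℕ => c * (L:ℝ) ^ β) atTop atTop :=
      h1.comp tendsto_natCast_atTop_atTop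
    obtain ⟨L, hL⟩ := ((h2.eventually_ge_atTop (2*(C+1))).and
      (eventually_ge_atTop 2)).exists
    exact ⟨L, hL.2, hL.1⟩
  have hLpos : (0:ℝ) < (L:ℝ) := by positivity
  -- slow variation at L
  have hratio : ∀ᶠ n : ℕ in atTop, (1:ℝ)/2 ≤ ℓ ((L:ℝ) * n) / ℓ n := by
    have h := (hsv (L:ℝ) hLpos).eventually (eventually_ge_nhds (by norm_num : (1:ℝ)/2 < 1))
    exact tendsto_natCast_atTop_atTop.eventually h
  set c' : ℝ := 1 / (L:ℝ) ^ (j+1) with hc'def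
  have hc'pos : 0 < c' := by positivity
  refine ⟨c', max (C * 2 ^ (j+1)) c', hc'pos, le_max_right _ _, ?_⟩
  filter_upwards [eventually_ge_atTop (N0 + 1), hratio] with n hn hrat
  have hn1 : 1 ≤ n := by omega
  have hnN0 : N0 ≤ n := by omega
  have hnR : (0:ℝ) < (n:ℝ) := by exact_mod_cast hn1
  have hln : 0 < ℓ n := hpos _ hnR
  have hid := rpow_split (n:ℝ) hnR β j
  have hnβ : (0:ℝ) < (n:ℝ) ^ β := Real.rpow_pos_of_pos hnR β
  constructor
  · -- lower bound: use split at n and L*n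
    have hLn : n ≤ L * n := Nat.le_mul_of_pos_left n (by omega)
    have split := Finset.sum_range_add_sum_Ico (fun k => (k:ℝ)^j * q k)
      (Nat.add_le_add_right hLn 1)
    have h1 := (hN0 (L*n) (le_trans hnN0 hLn)).1
    have h2 := (hN0 n hnN0).2
    have hcast : ((L*n : ℕ):ℝ) = (L:ℝ) * n := by push_cast; ring
    have hlLn : ℓ n / 2 ≤ ℓ ((L*n : ℕ):ℝ) := by
      rw [hcast]
      calc ℓ n / 2 = (1/2) * ℓ n := by ring
        _ ≤ (ℓ ((L:ℝ)*n) / ℓ n) * ℓ n := mul_le_mul_of_nonneg_right hrat hln.le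
        _ = ℓ ((L:ℝ)*n) := by field_simp
    have hLnβ : ((L*n : ℕ):ℝ) ^ β = (L:ℝ)^β * (n:ℝ)^β := by
      rw [hcast, Real.mul_rpow hLpos.le hnR.le]
    -- the Ico sum is ≥ n^β ℓ n
    have hIco_ge : (n:ℝ)^β * ℓ n ≤ ∑ k ∈ Ico (n+1) (L*n+1), (k:ℝ)^j * q k := by
      have e1 : ∑ k ∈ Ico (n+1) (L*n+1), (k:ℝ)^j * q k
          = ∑ k ∈ range (L*n+1), (k:ℝ)^j * q k - ∑ k ∈ range (n+1), (k:ℝ)^j * q k := by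
        rw [← split]; ring
      rw [e1]
      have e2 : c * ((L:ℝ)^β * (n:ℝ)^β) * (ℓ n / 2) ≤ c * ((L*n:ℕ):ℝ)^β * ℓ ((L*n:ℕ):ℝ) := by
        rw [hLnβ]
        exact mul_le_mul_of_nonneg_left hlLn (by positivity)
      have e3 : c * ((L:ℝ)^β * (n:ℝ)^β) * (ℓ n / 2) = (c * (L:ℝ)^β / 2) * ((n:ℝ)^β * ℓ n) := by
        ring
      have e4 : C + 1 ≤ c * (L:ℝ)^β / 2 := by linarith
      have e5 : (C + 1) * ((n:ℝ)^β * ℓ n) ≤ (c * (L:ℝ)^β / 2) * ((n:ℝ)^β * ℓ n) :=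
        mul_le_mul_of_nonneg_right e4 (by positivity)
      nlinarith [mul_pos hnβ hln]
    -- upper bound for the Ico sum
    have hub' : ∑ k ∈ Ico (n+1) (L*n+1), (k:ℝ)^j * q k
        ≤ (L:ℝ)^(j+1) * (n:ℝ)^(j+1) * q n := by
      refine le_trans (sum_Ico_le_aux q hq0 hmono j n (L*n)) ?_
      have h5 : ((L*n - n : ℕ):ℝ) ≤ (L:ℝ) * n := by
        have h : (L*n - n : ℕ) ≤ L * n := by omega
        calc ((L*n - n : ℕ):ℝ) ≤ ((L*n : ℕ):ℝ) := by exact_mod_cast h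
          _ = (L:ℝ) * n := hcast
      have h6 : ((L*n:ℕ):ℝ)^j = (L:ℝ)^j * (n:ℝ)^j := by rw [hcast, mul_pow]
      rw [h6]
      calc ((L*n - n : ℕ):ℝ) * ((L:ℝ)^j * (n:ℝ)^j) * q n
          ≤ ((L:ℝ) * n) * ((L:ℝ)^j * (n:ℝ)^j) * q n := by
            exact mul_le_mul_of_nonneg_right
              (mul_le_mul_of_nonneg_right h5 (by positivity)) (hq0 n)
        _ = (L:ℝ)^(j+1) * (n:ℝ)^(j+1) * q n := by ring
    have hfin : (n:ℝ)^β * ℓ n ≤ (L:ℝ)^(j+1) * (n:ℝ)^(j+1) * q n := le_trans hIco_ge hub'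
    have h10 : (c' * (n:ℝ)^(β-(j:ℝ)-1) * ℓ n) * ((L:ℝ)^(j+1) * (n:ℝ)^(j+1))
        = (n:ℝ)^β * ℓ n := by
      rw [hc'def]
      field_simp
      linear_combination hid
    have hK : (0:ℝ) < (L:ℝ)^(j+1) * (n:ℝ)^(j+1) := by positivity
    refine le_of_mul_le_mul_right ?_ hK
    rw [h10]
    nlinarith [hfin]
  · -- upper bound: split at m = n/2 and n
    set m := n / 2 with hmdef
    have hmn : m + 1 ≤ n + 1 := by omega
    have split := Finset.sum_range_add_sum_Ico (fun k => (k:ℝ)^j * q k) hmn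
    have hlow := sum_Ico_ge_aux q hq0 hmono j m n
    have hSm : (0:ℝ) ≤ ∑ k ∈ range (m+1), (k:ℝ)^j * q k := by
      apply Finset.sum_nonneg
      intro k _
      have := hq0 k
      positivity
    have h2 := (hN0 n hnN0).2
    have hstep : ((n - m : ℕ):ℝ) * ((m+1:ℕ):ℝ)^j * q n ≤ C * (n:ℝ)^β * ℓ n := by
      have : ((n - m : ℕ):ℝ) * ((m+1:ℕ):ℝ)^j * q n ≤ ∑ k ∈ range (n+1), (k:ℝ)^j * q k := by
        rw [← split]; linarith
      linarith
    have hA : (n:ℝ) ≤ 2 * ((n - m : ℕ):ℝ) := by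
      have h : n ≤ 2 * (n - m) := by omega
      exact_mod_cast h
    have hB : (n:ℝ) ≤ 2 * ((m+1 : ℕ):ℝ) := by
      have h : n ≤ 2 * (m+1) := by omega
      exact_mod_cast h
    have hpow : (n:ℝ)^(j+1) ≤ 2^(j+1) * (((n - m:ℕ):ℝ) * ((m+1:ℕ):ℝ)^j) := by
      calc (n:ℝ)^(j+1) = (n:ℝ) * (n:ℝ)^j := by ring
        _ ≤ (2 * ((n - m:ℕ):ℝ)) * (2 * ((m+1:ℕ):ℝ))^j :=
            mul_le_mul hA (pow_le_pow_left₀ hnR.le hB j) (by positivity) (by positivity)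
        _ = 2^(j+1) * (((n - m:ℕ):ℝ) * ((m+1:ℕ):ℝ)^j) := by rw [mul_pow]; ring
    have h7 : q n * (n:ℝ)^(j+1) ≤ 2^(j+1) * (C * (n:ℝ)^β * ℓ n) := by
      calc q n * (n:ℝ)^(j+1)
          ≤ q n * (2^(j+1) * (((n - m:ℕ):ℝ) * ((m+1:ℕ):ℝ)^j)) :=
            mul_le_mul_of_nonneg_left hpow (hq0 n)
        _ = 2^(j+1) * (((n - m : ℕ):ℝ) * ((m+1:ℕ):ℝ)^j * q n) := by ring
        _ ≤ 2^(j+1) * (C * (n:ℝ)^β * ℓ n) := by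
            exact mul_le_mul_of_nonneg_left hstep (by positivity)
    have h8 : q n * (n:ℝ)^(j+1) ≤ (C * 2^(j+1) * (n:ℝ)^(β-(j:ℝ)-1) * ℓ n) * (n:ℝ)^(j+1) := by
      have e : (C * 2^(j+1) * (n:ℝ)^(β-(j:ℝ)-1) * ℓ n) * (n:ℝ)^(j+1)
          = 2^(j+1) * (C * (n:ℝ)^β * ℓ n) := by
        linear_combination (C * 2^(j+1) * ℓ n) * hid
      rw [e]; exact h7
    have h9 : q n ≤ C * 2^(j+1) * (n:ℝ)^(β-(j:ℝ)-1) * ℓ n :=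
      le_of_mul_le_mul_right h8 (by positivity)
    refine h9.trans ?_
    have hrp : (0:ℝ) ≤ (n:ℝ)^(β-(j:ℝ)-1) := (Real.rpow_pos_of_pos hnR _).le
    exact mul_le_mul_of_nonneg_right
      (mul_le_mul_of_nonneg_right (le_max_left _ _) hrp) hln.le
end

section
/- Let A be a real symmetric N×N matrix whose trace satisfies Tr(A^{2n+1}) ≥ 0 for a given n ≥ 0, and whose eigenvalues all lie in [-1,1]. Then Tr(A^{2n+2}) ≤ 2·∑_{k : λ_k > 0} λ_k^{2n}, where λ_1, ..., λ_N are the eigenvalues of A. -/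
open scoped BigOperators

lemma trace_pow_eq {N : ℕ} (A : Matrix (Fin N) (Fin N) ℝ) (hA : A.IsHermitian) (m : ℕ) :
    Matrix.trace (A ^ m) = ∑ k, hA.eigenvalues k ^ m := by
  classical
  set U := (Matrix.IsHermitian.eigenvectorUnitary hA : Matrix (Fin N) (Fin N) ℝ)
  have hU : star U * U = 1 := (Matrix.mem_unitaryGroup_iff').mp
      (Matrix.IsHermitian.eigenvectorUnitary hA).2
  have h := hA.spectral_theorem
  have hpow : A ^ m = U * (Matrix.diagonal (RCLike.ofReal ∘ hA.eigenvalues)) ^ m * star U := by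
    conv_lhs => rw [h]
    induction m with
    | zero =>
      simp only [pow_zero, mul_one]
      have := (Matrix.mem_unitaryGroup_iff).mp (Matrix.IsHermitian.eigenvectorUnitary hA).2
      exact this.symm
    | succ k ih =>
      rw [pow_succ, pow_succ, ih]
      calc U * Matrix.diagonal (RCLike.ofReal ∘ hA.eigenvalues) ^ k * star U *
            (U * Matrix.diagonal (RCLike.ofReal ∘ hA.eigenvalues) * star U)
          = U * Matrix.diagonal (RCLike.ofReal ∘ hA.eigenvalues) ^ k * (star U * U) *
            Matrix.diagonal (RCLike.ofReal ∘ hA.eigenvalues) * star U := by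
            noncomm_ring
        _ = U * (Matrix.diagonal (RCLike.ofReal ∘ hA.eigenvalues) ^ k *
            Matrix.diagonal (RCLike.ofReal ∘ hA.eigenvalues)) * star U := by
            rw [hU]; noncomm_ring
  rw [hpow, Matrix.trace_mul_cycle, hU, one_mul, Matrix.diagonal_pow,
    Matrix.trace_diagonal]
  simp [RCLike.ofReal]

theorem stmt7 {N : ℕ} (A : Matrix (Fin N) (Fin N) ℝ) (hA : A.IsHermitian)
    (n : ℕ) (htr : 0 ≤ Matrix.trace (A ^ (2 * n + 1)))
    (hbound : ∀ k, |hA.eigenvalues k| ≤ 1) :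
    Matrix.trace (A ^ (2 * n + 2)) ≤
      2 * ∑ k ∈ Finset.univ.filter (fun k => 0 < hA.eigenvalues k),
        hA.eigenvalues k ^ (2 * n) := by
  classical
  set f := hA.eigenvalues with hf
  rw [trace_pow_eq A hA] at htr ⊢
  set P := Finset.univ.filter (fun k => 0 < f k) with hP
  have hsplit : ∑ k, f k ^ (2 * n + 2)
      = ∑ k ∈ P, f k ^ (2 * n + 2) + ∑ k ∈ Pᶜ, f k ^ (2 * n + 2) :=
    (Finset.sum_add_sum_compl P _).symm
  have h1 : ∑ k ∈ P, f k ^ (2 * n + 2) ≤ ∑ k ∈ P, f k ^ (2 * n) := by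
    apply Finset.sum_le_sum
    intro k hk
    have hk' : 0 < f k := (Finset.mem_filter.mp hk).2
    have : f k ≤ 1 := le_trans (le_abs_self _) (hbound k)
    exact pow_le_pow_of_le_one hk'.le this (by omega)
  have h2 : ∑ k ∈ Pᶜ, f k ^ (2 * n + 2) ≤ -∑ k ∈ Pᶜ, f k ^ (2 * n + 1) := by
    rw [← Finset.sum_neg_distrib]
    apply Finset.sum_le_sum
    intro k hk
    have hk' : f k ≤ 0 := by
      have := Finset.mem_compl.mp hk
      simp only [hP, Finset.mem_filter, Finset.mem_univ, true_and, not_lt] at this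
      exact this
    have habs : |f k| ≤ 1 := hbound k
    have hge : -1 ≤ f k := neg_le_of_abs_le habs
    have : f k ^ (2 * n + 2) = (-(f k)) * (-(f k ^ (2 * n + 1))) := by ring
    rw [this]
    have hnn : 0 ≤ -(f k ^ (2 * n + 1)) := by
      have := odd_two_mul_add_one n
      have := Odd.pow_nonpos (odd_two_mul_add_one n) hk'
      linarith
    calc (-(f k)) * (-(f k ^ (2 * n + 1))) ≤ 1 * (-(f k ^ (2 * n + 1))) := by
          apply mul_le_mul_of_nonneg_right _ hnn; linarith
      _ = -(f k ^ (2 * n + 1)) := one_mul _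
  have h3 : -∑ k ∈ Pᶜ, f k ^ (2 * n + 1) ≤ ∑ k ∈ P, f k ^ (2 * n + 1) := by
    have := Finset.sum_add_sum_compl P (fun k => f k ^ (2 * n + 1))
    linarith [htr, this]
  have h4 : ∑ k ∈ P, f k ^ (2 * n + 1) ≤ ∑ k ∈ P, f k ^ (2 * n) := by
    apply Finset.sum_le_sum
    intro k hk
    have hk' : 0 < f k := (Finset.mem_filter.mp hk).2
    have : f k ≤ 1 := le_trans (le_abs_self _) (hbound k)
    exact pow_le_pow_of_le_one hk'.le this (by omega)
  have : ∑ k, f k ^ (2 * n + 1) = Matrix.trace (A ^ (2 * n + 1)) := by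
    rw [trace_pow_eq A hA]
  linarith [hsplit]
end

section
/- Let Γ be a countable group, μ a probability measure on Γ with Green function G finite at r, H a subgroup, and p = p_{r,H} the first-return kernel to H associated with rμ. Then for every x ∈ H with x ≠ e, G(e,x|r) = ∑_{y ∈ H} p(e,y)·G(y,x|r), and G(e,e|r) = 1 + ∑_{y ∈ H} p(e,y)·G(y,e|r). -/
open scoped Classical BigOperators

/-- n-th convolution power of a measure `μ` on a group, with `μ^{(0)} = δ_e`. -/
noncomputable def convPow {Γ : Type*} [Group Γ] (μ : Γ → ℝ) : ℕ → Γ → ℝ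
  | 0 => fun x => if x = 1 then 1 else 0
  | n + 1 => fun x => ∑' y : Γ, μ y * convPow μ n (y⁻¹ * x)

/-- The Green function `G(x,y|r) = ∑_{n≥0} μ^{(n)}(x⁻¹y) rⁿ`. -/
noncomputable def Green {Γ : Type*} [Group Γ] (μ : Γ → ℝ) (x y : Γ) (r : ℝ) : ℝ :=
  ∑' n : ℕ, convPow μ n (x⁻¹ * y) * r ^ n

/-- `avoidK μ S n x y` is the total `μ`-weight of paths from `x` to `y` with `n`
intermediate points, all lying in `S`. -/
noncomputable def avoidK {Γ : Type*} [Group Γ] (μ : Γ → ℝ) (S : Set Γ) : ℕ → Γ → Γ → ℝ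
  | 0 => fun x y => μ (x⁻¹ * y)
  | n + 1 => fun x y => ∑' z : Γ, S.indicator (fun z => μ (x⁻¹ * z) * avoidK μ S n z y) z

/-- The first-return kernel to `H` associated with `rμ`. -/
noncomputable def firstReturn {Γ : Type*} [Group Γ] (μ : Γ → ℝ) (H : Subgroup Γ)
    (r : ℝ) (x y : Γ) : ℝ :=
  ∑' n : ℕ, r ^ (n + 1) * avoidK μ ((H : Set Γ))ᶜ n x y

/- ### Auxiliary ENNReal-valued mirrors of the definitions -/

open ENNReal

/-- ENNReal mirror of `convPow`. -/
noncomputable def convPowE {Γ : Type*} [Group Γ] (ν : Γ → ℝ≥0∞) : ℕ → Γ → ℝ≥0∞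
  | 0 => fun x => if x = 1 then 1 else 0
  | n + 1 => fun x => ∑' y : Γ, ν y * convPowE ν n (y⁻¹ * x)

/-- ENNReal mirror of `avoidK`. -/
noncomputable def avoidKE {Γ : Type*} [Group Γ] (ν : Γ → ℝ≥0∞) (S : Set Γ) : ℕ → Γ → Γ → ℝ≥0∞
  | 0 => fun x y => ν (x⁻¹ * y)
  | n + 1 => fun x y => ∑' z : Γ, S.indicator (fun z => ν (x⁻¹ * z) * avoidKE ν S n z y) z

section EAux

variable {Γ : Type*} [Group Γ] {ν : Γ → ℝ≥0∞}

lemma tsum_mulLeft (a : Γ) (f : Γ → ℝ≥0∞) : ∑' x : Γ, f (a * x) = ∑' x : Γ, f x :=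
  (Equiv.mulLeft a).tsum_eq f

lemma convPowE_total (hν : ∑' g, ν g = 1) : ∀ n, ∑' x, convPowE ν n x = 1
  | 0 => by simp [convPowE, tsum_ite_eq]
  | n + 1 => by
    calc ∑' x, convPowE ν (n+1) x = ∑' (x : Γ) (y : Γ), ν y * convPowE ν n (y⁻¹ * x) := rfl
    _ = ∑' (y : Γ) (x : Γ), ν y * convPowE ν n (y⁻¹ * x) := ENNReal.tsum_comm
    _ = ∑' y : Γ, ν y * ∑' x : Γ, convPowE ν n (y⁻¹ * x) := by
        simp only [ENNReal.tsum_mul_left]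
    _ = ∑' y : Γ, ν y * 1 := by
        refine tsum_congr fun y => ?_
        rw [tsum_mulLeft y⁻¹ (convPowE ν n), convPowE_total hν n]
    _ = 1 := by simpa using hν

lemma convPowE_le_one (hν : ∑' g, ν g = 1) (n : ℕ) (x : Γ) : convPowE ν n x ≤ 1 :=
  (ENNReal.le_tsum x).trans (convPowE_total hν n).le

lemma convPowE_ne_top (hν : ∑' g, ν g = 1) (n : ℕ) (x : Γ) : convPowE ν n x ≠ ⊤ :=
  ((convPowE_le_one hν n x).trans_lt ENNReal.one_lt_top).ne

lemma convPowE_one_eq (g : Γ) : convPowE ν 1 g = ν g := by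
  rw [show convPowE ν 1 g = ∑' y : Γ, ν y * convPowE ν 0 (y⁻¹ * g) from rfl]
  rw [tsum_eq_single g]
  · simp [convPowE]
  · intro y hy
    have h : ¬ (y⁻¹ * g = 1) := fun h => hy (inv_mul_eq_one.mp h)
    simp only [convPowE, if_neg h, mul_zero]

lemma convPowE_succ_left (n : ℕ) (w x : Γ) :
    convPowE ν (n+1) (w⁻¹ * x) = ∑' z : Γ, ν (w⁻¹ * z) * convPowE ν n (z⁻¹ * x) := by
  rw [show convPowE ν (n+1) (w⁻¹*x) = ∑' u : Γ, ν u * convPowE ν n (u⁻¹ * (w⁻¹*x)) from rfl,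
    ← tsum_mulLeft (f := fun u => ν u * convPowE ν n (u⁻¹ * (w⁻¹*x))) w⁻¹]
  refine tsum_congr fun z => ?_
  congr 2
  group

lemma avoidKE_tsum_le (hν : ∑' g, ν g = 1) (S : Set Γ) :
    ∀ (n : ℕ) (w : Γ), ∑' y, avoidKE ν S n w y ≤ 1
  | 0, w => by
    rw [show (fun y => avoidKE ν S 0 w y) = fun y => ν (w⁻¹ * y) from rfl,
      tsum_mulLeft w⁻¹ ν, hν]
  | n + 1, w => by
    calc ∑' y, avoidKE ν S (n+1) w y
        = ∑' (y : Γ) (z : Γ), S.indicator (fun z => ν (w⁻¹ * z) * avoidKE ν S n z y) z := rfl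
    _ = ∑' (z : Γ) (y : Γ), S.indicator (fun z => ν (w⁻¹ * z) * avoidKE ν S n z y) z :=
        ENNReal.tsum_comm
    _ ≤ ∑' (z : Γ) (y : Γ), ν (w⁻¹ * z) * avoidKE ν S n z y := by
        refine ENNReal.tsum_le_tsum fun z => ENNReal.tsum_le_tsum fun y => ?_
        exact Set.indicator_le_self _ _ z
    _ = ∑' z : Γ, ν (w⁻¹ * z) * ∑' y, avoidKE ν S n z y := by
        simp only [ENNReal.tsum_mul_left]
    _ ≤ ∑' z : Γ, ν (w⁻¹ * z) * 1 :=
        ENNReal.tsum_le_tsum fun z => mul_le_mul_right (avoidKE_tsum_le hν S n z) _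
    _ ≤ 1 := by
        simpa [tsum_mulLeft w⁻¹ ν] using hν.le

lemma avoidKE_ne_top (hν : ∑' g, ν g = 1) (S : Set Γ) (n : ℕ) (w y : Γ) :
    avoidKE ν S n w y ≠ ⊤ :=
  (((ENNReal.le_tsum y).trans (avoidKE_tsum_le hν S n w)).trans_lt ENNReal.one_lt_top).ne

lemma avoidKE_le_convPowE (S : Set Γ) : ∀ (n : ℕ) (w y : Γ),
    avoidKE ν S n w y ≤ convPowE ν (n+1) (w⁻¹ * y)
  | 0, w, y => le_of_eq (convPowE_one_eq (w⁻¹ * y)).symm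
  | n + 1, w, y => by
    calc avoidKE ν S (n+1) w y
        = ∑' z : Γ, S.indicator (fun z => ν (w⁻¹ * z) * avoidKE ν S n z y) z := rfl
    _ ≤ ∑' z : Γ, ν (w⁻¹ * z) * avoidKE ν S n z y :=
        ENNReal.tsum_le_tsum fun z => Set.indicator_le_self _ _ z
    _ ≤ ∑' z : Γ, ν (w⁻¹ * z) * convPowE ν (n+1) (z⁻¹ * y) :=
        ENNReal.tsum_le_tsum fun z => mul_le_mul_right (avoidKE_le_convPowE S n z y) _
    _ = convPowE ν (n+2) (w⁻¹ * y) := (convPowE_succ_left (n+1) w y).symm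

/-- First-visit decomposition of the convolution powers. -/
lemma decompE (H : Subgroup Γ) (x : Γ) : ∀ (m : ℕ) (w : Γ),
    convPowE ν (m+1) (w⁻¹ * x) =
      (∑ k ∈ Finset.range (m+1), ∑' y : (H : Set Γ),
        avoidKE ν ((H : Set Γ))ᶜ k w y * convPowE ν (m-k) ((y : Γ)⁻¹ * x))
      + (if x ∈ H then 0 else avoidKE ν ((H : Set Γ))ᶜ m w x) := by
  intro m
  induction m with
  | zero =>
    intro w
    rw [convPowE_one_eq, Finset.sum_range_one]
    by_cases hx : x ∈ H
    · rw [if_pos hx, add_zero]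
      rw [tsum_eq_single (⟨x, hx⟩ : (H : Set Γ))]
      · simp [avoidKE, convPowE]
      · intro y hy
        have h : ¬ ((y : Γ)⁻¹ * x = 1) := fun h => hy (Subtype.ext (inv_mul_eq_one.mp h))
        simp only [convPowE, Nat.zero_sub, if_neg h, mul_zero]
    · rw [if_neg hx]
      have h0 : ∀ y : (H : Set Γ),
          avoidKE ν ((H : Set Γ))ᶜ 0 w y * convPowE ν (0-0) ((y : Γ)⁻¹ * x) = 0 := by
        intro y
        have h : ¬ ((y : Γ)⁻¹ * x = 1) := fun h => hx ((inv_mul_eq_one.mp h) ▸ y.2)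
        simp only [convPowE, Nat.zero_sub, if_neg h, mul_zero]
      rw [tsum_congr h0, tsum_zero, zero_add]
      rfl
  | succ m ih =>
    intro w
    set S : Set Γ := ((H : Set Γ))ᶜ with hS
    set f : Γ → ℝ≥0∞ := fun z => ν (w⁻¹ * z) * convPowE ν (m+1) (z⁻¹ * x) with hf
    have h1 : convPowE ν (m+1+1) (w⁻¹ * x) = ∑' z : Γ, f z := convPowE_succ_left (m+1) w x
    have h2 : ∑' z : Γ, f z = (∑' y : (H : Set Γ), f y) + ∑' z : ↥S, f z := by
      rw [tsum_subtype (H : Set Γ) f, tsum_subtype S f, ← ENNReal.tsum_add]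
      exact tsum_congr fun z =>
        (congrFun (Set.indicator_self_add_compl (H : Set Γ) f) z).symm
    have h3 : ∑' z : ↥S, f z =
        (∑ k ∈ Finset.range (m+1), ∑' z : ↥S, ν (w⁻¹ * z) *
          ∑' y : (H : Set Γ), avoidKE ν S k z y * convPowE ν (m-k) ((y : Γ)⁻¹ * x))
        + ∑' z : ↥S, ν (w⁻¹ * z) * (if x ∈ H then 0 else avoidKE ν S m z x) := by
      rw [← Summable.tsum_finsetSum (fun k _ => ENNReal.summable), ← ENNReal.tsum_add]
      refine tsum_congr fun z => ?_
      rw [hf]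
      dsimp only
      rw [ih z, mul_add, Finset.mul_sum]
    have h4 : ∀ k, ∑' z : ↥S, ν (w⁻¹ * z) *
          ∑' y : (H : Set Γ), avoidKE ν S k z y * convPowE ν (m-k) ((y : Γ)⁻¹ * x)
        = ∑' y : (H : Set Γ), avoidKE ν S (k+1) w y * convPowE ν (m-k) ((y : Γ)⁻¹ * x) := by
      intro k
      calc ∑' z : ↥S, ν (w⁻¹ * z) *
            ∑' y : (H : Set Γ), avoidKE ν S k z y * convPowE ν (m-k) ((y : Γ)⁻¹ * x)
          = ∑' (z : ↥S) (y : (H : Set Γ)),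
              (ν (w⁻¹ * z) * avoidKE ν S k z y) * convPowE ν (m-k) ((y : Γ)⁻¹ * x) := by
            refine tsum_congr fun z => ?_
            rw [← ENNReal.tsum_mul_left]
            exact tsum_congr fun y => by ring
      _ = ∑' (y : (H : Set Γ)) (z : ↥S),
              (ν (w⁻¹ * z) * avoidKE ν S k z y) * convPowE ν (m-k) ((y : Γ)⁻¹ * x) :=
            ENNReal.tsum_comm
      _ = ∑' y : (H : Set Γ),
              (∑' z : ↥S, ν (w⁻¹ * z) * avoidKE ν S k z y) * convPowE ν (m-k) ((y : Γ)⁻¹ * x) := by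
            refine tsum_congr fun y => ?_
            rw [ENNReal.tsum_mul_right]
      _ = _ := by
            refine tsum_congr fun y => ?_
            congr 1
            rw [show avoidKE ν S (k+1) w (y : Γ)
                = ∑' z : Γ, S.indicator (fun z => ν (w⁻¹ * z) * avoidKE ν S k z y) z from rfl,
              ← tsum_subtype S (fun z => ν (w⁻¹ * z) * avoidKE ν S k z (y : Γ))]
    have h5 : ∑' z : ↥S, ν (w⁻¹ * z) * (if x ∈ H then 0 else avoidKE ν S m z x)
        = (if x ∈ H then 0 else avoidKE ν S (m+1) w x) := by
      by_cases hx : x ∈ H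
      · simp [hx]
      · simp only [if_neg hx]
        rw [show avoidKE ν S (m+1) w x
            = ∑' z : Γ, S.indicator (fun z => ν (w⁻¹ * z) * avoidKE ν S m z x) z from rfl,
          ← tsum_subtype S (fun z => ν (w⁻¹ * z) * avoidKE ν S m z x)]
    have h6 : ∑' y : (H : Set Γ), f y
        = ∑' y : (H : Set Γ), avoidKE ν S 0 w y * convPowE ν (m+1) ((y : Γ)⁻¹ * x) := rfl
    rw [h1, h2, h3, h5, h6]
    simp only [h4]
    conv_rhs => rw [Finset.sum_range_succ']
    simp only [Nat.succ_sub_succ, Nat.sub_zero]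
    rw [show avoidKE ν S 0 w = fun y => ν (w⁻¹ * y) from rfl]
    ring

lemma tsum_tsum_tsum_mul {α : Type*} (A B : ℕ → α → ℝ≥0∞) :
    ∑' (p : ℕ) (q : ℕ) (y : α), A p y * B q y
      = ∑' y : α, (∑' p, A p y) * (∑' q, B q y) := by
  calc ∑' (p) (q) (y : α), A p y * B q y
      = ∑' (p) (y : α) (q), A p y * B q y := tsum_congr fun p => ENNReal.tsum_comm
  _ = ∑' (p) (y : α), A p y * ∑' q, B q y :=
      tsum_congr fun p => tsum_congr fun y => ENNReal.tsum_mul_left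
  _ = ∑' (y : α) (p), A p y * ∑' q, B q y := ENNReal.tsum_comm
  _ = ∑' y : α, (∑' p, A p y) * ∑' q, B q y := tsum_congr fun y => ENNReal.tsum_mul_right

lemma diagE (u : ℕ × ℕ → ℝ≥0∞) :
    ∑' m : ℕ, ∑ k ∈ Finset.range (m+1), u (k, m-k) = ∑' p : ℕ × ℕ, u p := by
  calc ∑' m : ℕ, ∑ k ∈ Finset.range (m+1), u (k, m-k)
      = ∑' m : ℕ, ∑ ij ∈ Finset.HasAntidiagonal.antidiagonal m, u ij := by
        refine tsum_congr fun m => ?_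
        rw [Finset.Nat.sum_antidiagonal_eq_sum_range_succ_mk]
  _ = ∑' (m : ℕ) (ij : (Finset.HasAntidiagonal.antidiagonal m : Finset (ℕ × ℕ))), u ij := by
        refine tsum_congr fun m => ?_
        rw [Finset.tsum_subtype]
  _ = ∑' σ : (Σ m : ℕ, (Finset.HasAntidiagonal.antidiagonal m : Finset (ℕ × ℕ))), u σ.2 :=
        (ENNReal.tsum_sigma (fun (m : ℕ) (ij : {p : ℕ × ℕ // p ∈ Finset.HasAntidiagonal.antidiagonal m}) => u ↑ij)).symm
  _ = ∑' p : ℕ × ℕ, u p := Finset.HasAntidiagonal.sigmaAntidiagonalEquivProd.tsum_eq u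

/-- Summed first-visit decomposition (Cauchy product form). -/
lemma keyE (H : Subgroup Γ) (rE : ℝ≥0∞) (x : Γ) (hx : x ∈ H) :
    ∑' m : ℕ, rE^(m+1) * convPowE ν (m+1) x
      = ∑' y : ↥(H : Set Γ),
          (∑' n : ℕ, rE^(n+1) * avoidKE ν ((H : Set Γ))ᶜ n 1 y)
          * (∑' n : ℕ, convPowE ν n ((y : Γ)⁻¹ * x) * rE^n) := by
  suffices h : ∑' m : ℕ, rE^(m+1) * convPowE ν (m+1) x
      = ∑' y : ↥(H : Set Γ),
          (∑' p : ℕ, (fun p (y : ↥(H : Set Γ)) => rE^(p+1) * avoidKE ν ((H : Set Γ))ᶜ p 1 y) p y)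
          * (∑' q : ℕ, (fun q (y : ↥(H : Set Γ)) => convPowE ν q ((y : Γ)⁻¹ * x) * rE^q) q y) by
    simpa using h
  set A : ℕ → ↥(H : Set Γ) → ℝ≥0∞ :=
    fun p y => rE^(p+1) * avoidKE ν ((H : Set Γ))ᶜ p 1 y with hA
  set B : ℕ → ↥(H : Set Γ) → ℝ≥0∞ :=
    fun q y => convPowE ν q ((y : Γ)⁻¹ * x) * rE^q with hB
  have step_a : ∀ m : ℕ, rE^(m+1) * convPowE ν (m+1) x
      = ∑ k ∈ Finset.range (m+1), ∑' y : ↥(H : Set Γ), A k y * B (m-k) y := by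
    intro m
    have hd := decompE (ν := ν) H x m 1
    rw [inv_one, one_mul, if_pos hx, add_zero] at hd
    rw [hd, Finset.mul_sum]
    refine Finset.sum_congr rfl fun k hk => ?_
    rw [← ENNReal.tsum_mul_left]
    refine tsum_congr fun y => ?_
    have hk' : k ≤ m := Nat.lt_succ_iff.mp (Finset.mem_range.mp hk)
    have hpow : rE^(m+1) = rE^(k+1) * rE^(m-k) := by
      rw [← pow_add]
      congr 1
      omega
    rw [hA, hB]
    dsimp only
    rw [hpow]
    ring
  calc ∑' m : ℕ, rE^(m+1) * convPowE ν (m+1) x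
      = ∑' m : ℕ, ∑ k ∈ Finset.range (m+1),
          (fun pq : ℕ × ℕ => ∑' y : ↥(H : Set Γ), A pq.1 y * B pq.2 y) (k, m-k) := by
        exact tsum_congr step_a
  _ = ∑' p : ℕ × ℕ, ∑' y : ↥(H : Set Γ), A p.1 y * B p.2 y :=
      diagE (fun pq : ℕ × ℕ => ∑' y : ↥(H : Set Γ), A pq.1 y * B pq.2 y)
  _ = ∑' (p : ℕ) (q : ℕ) (y : ↥(H : Set Γ)), A p y * B q y :=
      ENNReal.tsum_prod (f := fun p q => ∑' y : ↥(H : Set Γ), A p y * B q y)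
  _ = ∑' y : ↥(H : Set Γ), (∑' p, A p y) * (∑' q, B q y) := tsum_tsum_tsum_mul A B

/- ### Transfer between ℝ and ℝ≥0∞ -/

lemma nu_total (μ : Γ → ℝ) (hμ0 : ∀ g, 0 ≤ μ g) (hμ1 : HasSum μ 1) :
    ∑' g, ENNReal.ofReal (μ g) = 1 := by
  rw [← ENNReal.ofReal_tsum_of_nonneg hμ0 hμ1.summable, hμ1.tsum_eq, ENNReal.ofReal_one]

lemma convPow_toReal (μ : Γ → ℝ) (hμ0 : ∀ g, 0 ≤ μ g) (hμ1 : HasSum μ 1) : ∀ (n : ℕ) (x : Γ),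
    convPow μ n x = (convPowE (fun g => ENNReal.ofReal (μ g)) n x).toReal
  | 0, x => by
    by_cases h : x = 1 <;> simp [convPow, convPowE, h]
  | n + 1, x => by
    set ν : Γ → ℝ≥0∞ := fun g => ENNReal.ofReal (μ g) with hνdef
    have hν : ∑' g, ν g = 1 := nu_total μ hμ0 hμ1
    have hfin : ∀ y : Γ, ν y * convPowE ν n (y⁻¹ * x) ≠ ⊤ := fun y =>
      ENNReal.mul_ne_top ENNReal.ofReal_ne_top (convPowE_ne_top hν n _)
    calc convPow μ (n+1) x = ∑' y : Γ, μ y * convPow μ n (y⁻¹ * x) := rfl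
    _ = ∑' y : Γ, (ν y * convPowE ν n (y⁻¹ * x)).toReal := by
        refine tsum_congr fun y => ?_
        rw [convPow_toReal μ hμ0 hμ1 n, ENNReal.toReal_mul, hνdef]
        dsimp only
        rw [ENNReal.toReal_ofReal (hμ0 y)]
    _ = (∑' y : Γ, ν y * convPowE ν n (y⁻¹ * x)).toReal :=
        (ENNReal.tsum_toReal_eq hfin).symm
    _ = (convPowE ν (n+1) x).toReal := rfl

lemma avoidK_toReal (μ : Γ → ℝ) (hμ0 : ∀ g, 0 ≤ μ g) (hμ1 : HasSum μ 1) (S : Set Γ) :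
    ∀ (n : ℕ) (w y : Γ),
    avoidK μ S n w y = (avoidKE (fun g => ENNReal.ofReal (μ g)) S n w y).toReal
  | 0, w, y => by simp [avoidK, avoidKE, ENNReal.toReal_ofReal (hμ0 _)]
  | n + 1, w, y => by
    set ν : Γ → ℝ≥0∞ := fun g => ENNReal.ofReal (μ g) with hνdef
    have hν : ∑' g, ν g = 1 := nu_total μ hμ0 hμ1
    have hfin : ∀ z : Γ,
        S.indicator (fun z => ν (w⁻¹ * z) * avoidKE ν S n z y) z ≠ ⊤ := by
      intro z
      by_cases hz : z ∈ S
      · rw [Set.indicator_of_mem hz]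
        exact ENNReal.mul_ne_top ENNReal.ofReal_ne_top (avoidKE_ne_top hν S n _ _)
      · rw [Set.indicator_of_notMem hz]; exact ENNReal.zero_ne_top
    calc avoidK μ S (n+1) w y
        = ∑' z : Γ, S.indicator (fun z => μ (w⁻¹ * z) * avoidK μ S n z y) z := rfl
    _ = ∑' z : Γ, (S.indicator (fun z => ν (w⁻¹ * z) * avoidKE ν S n z y) z).toReal := by
        refine tsum_congr fun z => ?_
        by_cases hz : z ∈ S
        · rw [Set.indicator_of_mem hz, Set.indicator_of_mem hz, ENNReal.toReal_mul,
            avoidK_toReal μ hμ0 hμ1 S n z y, hνdef]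
          dsimp only
          rw [ENNReal.toReal_ofReal (hμ0 _)]
        · rw [Set.indicator_of_notMem hz, Set.indicator_of_notMem hz, ENNReal.toReal_zero]
    _ = (∑' z : Γ, S.indicator (fun z => ν (w⁻¹ * z) * avoidKE ν S n z y) z).toReal :=
        (ENNReal.tsum_toReal_eq hfin).symm
    _ = (avoidKE ν S (n+1) w y).toReal := rfl

end EAux

theorem stmt13 {Γ : Type*} [Group Γ] [Countable Γ] (μ : Γ → ℝ)
    (hμ0 : ∀ g, 0 ≤ μ g) (hμ1 : HasSum μ 1)
    (H : Subgroup Γ) (r : ℝ) (hr : 0 < r)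
    (hGreen : ∀ x y : Γ, Summable (fun n : ℕ => convPow μ n (x⁻¹ * y) * r ^ n)) :
    (∀ x ∈ H, x ≠ 1 →
      Green μ 1 x r = ∑' y : H, firstReturn μ H r 1 (y : Γ) * Green μ (y : Γ) x r) ∧
    Green μ 1 1 r = 1 + ∑' y : H, firstReturn μ H r 1 (y : Γ) * Green μ (y : Γ) 1 r := by
  set ν : Γ → ℝ≥0∞ := fun g => ENNReal.ofReal (μ g) with hνdef
  set rE : ℝ≥0∞ := ENNReal.ofReal r with hrEdef
  have hν : ∑' g, ν g = 1 := nu_total μ hμ0 hμ1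
  have hcp : ∀ (n : ℕ) (x : Γ), convPow μ n x = (convPowE ν n x).toReal :=
    convPow_toReal μ hμ0 hμ1
  have hcfin : ∀ (n : ℕ) (x : Γ), convPowE ν n x ≠ ⊤ := convPowE_ne_top hν
  have haK : ∀ (n : ℕ) (w y : Γ),
      avoidK μ ((H : Set Γ))ᶜ n w y = (avoidKE ν ((H : Set Γ))ᶜ n w y).toReal :=
    avoidK_toReal μ hμ0 hμ1 ((H : Set Γ))ᶜ
  have hcp0 : ∀ (n : ℕ) (x : Γ), 0 ≤ convPow μ n x := fun n x => by
    rw [hcp]; exact ENNReal.toReal_nonneg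
  have hGpos : ∀ x y : Γ, 0 ≤ Green μ x y r := fun x y =>
    tsum_nonneg fun n => mul_nonneg (hcp0 n _) (pow_nonneg hr.le n)
  have hGE : ∀ x y : Γ,
      ENNReal.ofReal (Green μ x y r) = ∑' n : ℕ, convPowE ν n (x⁻¹ * y) * rE^n := by
    intro x y
    rw [Green, ENNReal.ofReal_tsum_of_nonneg
      (fun n => mul_nonneg (hcp0 n _) (pow_nonneg hr.le n)) (hGreen x y)]
    refine tsum_congr fun n => ?_
    rw [ENNReal.ofReal_mul (hcp0 n _), ENNReal.ofReal_pow hr.le]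
    congr 1
    rw [hcp, ENNReal.ofReal_toReal (hcfin n _)]
  have hGEfin : ∀ x y : Γ, (∑' n : ℕ, convPowE ν n (x⁻¹ * y) * rE^n) ≠ ⊤ := fun x y => by
    rw [← hGE]; exact ENNReal.ofReal_ne_top
  have hGtoReal : ∀ x y : Γ,
      Green μ x y r = (∑' n : ℕ, convPowE ν n (x⁻¹ * y) * rE^n).toReal := fun x y => by
    rw [← hGE, ENNReal.toReal_ofReal (hGpos x y)]
  -- finiteness of the ENNReal first-return kernel
  have hFEfin : ∀ y : Γ, (∑' n : ℕ, rE^(n+1) * avoidKE ν ((H : Set Γ))ᶜ n 1 y) ≠ ⊤ := by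
    intro y
    refine ne_top_of_le_ne_top (hGEfin 1 y) ?_
    calc ∑' n : ℕ, rE^(n+1) * avoidKE ν ((H : Set Γ))ᶜ n 1 y
        ≤ ∑' n : ℕ, rE^(n+1) * convPowE ν (n+1) (1⁻¹ * y) :=
          ENNReal.tsum_le_tsum fun n =>
            mul_le_mul_right (avoidKE_le_convPowE ((H : Set Γ))ᶜ n 1 y) _
    _ = ∑' n : ℕ, convPowE ν (n+1) (1⁻¹ * y) * rE^(n+1) := by
          exact tsum_congr fun n => mul_comm _ _
    _ ≤ convPowE ν 0 (1⁻¹ * y) * rE^0 + ∑' n : ℕ, convPowE ν (n+1) (1⁻¹ * y) * rE^(n+1) :=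
          le_add_self
    _ = ∑' n : ℕ, convPowE ν n (1⁻¹ * y) * rE^n :=
          (tsum_eq_zero_add' (f := fun n : ℕ => convPowE ν n (1⁻¹ * y) * rE^n)
            ENNReal.summable).symm
  have hFR : ∀ y : Γ, firstReturn μ H r 1 y
      = (∑' n : ℕ, rE^(n+1) * avoidKE ν ((H : Set Γ))ᶜ n 1 y).toReal := by
    intro y
    rw [firstReturn, ENNReal.tsum_toReal_eq
      (fun n => ENNReal.ne_top_of_tsum_ne_top (hFEfin y) n)]
    refine tsum_congr fun n => ?_
    rw [ENNReal.toReal_mul, ENNReal.toReal_pow, hrEdef, ENNReal.toReal_ofReal hr.le, haK]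
  -- the main ENNReal identity
  have hmain : ∀ x ∈ H, (∑' n : ℕ, convPowE ν n (1⁻¹ * x) * rE^n)
      = (if x = 1 then 1 else 0)
        + ∑' y : ↥(H : Set Γ),
            (∑' n : ℕ, rE^(n+1) * avoidKE ν ((H : Set Γ))ᶜ n 1 y)
            * (∑' n : ℕ, convPowE ν n ((y : Γ)⁻¹ * x) * rE^n) := by
    intro x hx
    simp only [inv_one, one_mul]
    rw [tsum_eq_zero_add' (f := fun n : ℕ => convPowE ν n x * rE ^ n) ENNReal.summable]
    simp only [pow_zero, mul_one]
    congr 1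
    rw [← keyE H rE x hx]
    exact tsum_congr fun n => mul_comm _ _
  -- real version
  have hfinal : ∀ x ∈ H, Green μ 1 x r = (if x = 1 then (1:ℝ) else 0)
      + ∑' y : H, firstReturn μ H r 1 (y : Γ) * Green μ (y : Γ) x r := by
    intro x hx
    have hSfin : (∑' y : ↥(H : Set Γ),
        (∑' n : ℕ, rE^(n+1) * avoidKE ν ((H : Set Γ))ᶜ n 1 y)
        * (∑' n : ℕ, convPowE ν n ((y : Γ)⁻¹ * x) * rE^n)) ≠ ⊤ := by
      refine ne_top_of_le_ne_top (hGEfin 1 x) ?_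
      rw [hmain x hx]
      exact le_add_self
    rw [hGtoReal 1 x, hmain x hx,
      ENNReal.toReal_add (by by_cases h : x = 1 <;> simp [h]) hSfin]
    congr 1
    · by_cases h : x = 1 <;> simp [h]
    · rw [ENNReal.tsum_toReal_eq (fun y => ENNReal.ne_top_of_tsum_ne_top hSfin y)]
      refine tsum_congr fun y => ?_
      rw [ENNReal.toReal_mul, ← hFR, ← hGtoReal]
  constructor
  · intro x hx hxne
    rw [hfinal x hx, if_neg hxne, zero_add]
  · rw [hfinal 1 H.one_mem, if_pos rfl]
end
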